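/- For all x1, x2 > 0, the joint reliability function satisfies P(X1 > x1, X2 > x2) = 1 - G(x1)^(α1+α3) - G(x2)^(α2+α3) + G(x1)^(α1) * G(x2)^(α2) * G(min(x1, x2))^(α3). -/

import Mathlib

open Real MeasureTheory ProbabilityTheory

/-- Base CDF of the exponentiated generalized Weibull–Gompertz distribution. -/
noncomputable def G (a b c d x : ℝ) : ℝ :=
  1 - Real.exp (-(a * x ^ b * (Real.exp (c * x ^ d) - 1)))

/-!
A Marshall–Olkin construction. Write `Fᵢ x = P(Uᵢ ≤ x)`. The event
`x₁ < max U₀ U₂ ∧ x₂ < max U₁ U₂` is the complement of `A ∪ B`, where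
`A = {U₀ ≤ x₁, U₂ ≤ x₁}`, `B = {U₁ ≤ x₂, U₂ ≤ x₂}` and
`A ∩ B = {U₀ ≤ x₁, U₁ ≤ x₂, U₂ ≤ min x₁ x₂}`. Inclusion–exclusion and independence give the
survival function `1 - F₀ F₂ - F₁ F₂ + F₀ F₁ F₂` for arbitrary marginals; for the marginals
`G ^ αᵢ` the products of powers combine because `G > 0` on `(0, ∞)`.
-/

lemma G_pos {a b c d x : ℝ} (ha : 0 < a) (hc : 0 < c) (hx : 0 < x) : 0 < G a b c d x := by
  have hexp : 0 < exp (c * x ^ d) - 1 := by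
    rw [sub_pos, one_lt_exp_iff]
    exact mul_pos hc (rpow_pos_of_pos hx d)
  have : exp (-(a * x ^ b * (exp (c * x ^ d) - 1))) < 1 := by
    rw [exp_lt_one_iff, neg_neg_iff_pos]
    exact mul_pos (mul_pos ha (rpow_pos_of_pos hx b)) hexp
  unfold G
  linarith

lemma setOf_lt_max_and_lt_max_eq_compl {Ω : Type*} (X Y Z : Ω → ℝ) (x₁ x₂ : ℝ) :
    {ω | x₁ < max (X ω) (Z ω) ∧ x₂ < max (Y ω) (Z ω)} =
      ({ω | X ω ≤ x₁ ∧ Z ω ≤ x₁} ∪ {ω | Y ω ≤ x₂ ∧ Z ω ≤ x₂})ᶜ := by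
  ext ω
  simp only [Set.mem_ofPred_eq, Set.mem_compl_iff, Set.mem_union, lt_max_iff, not_or, not_and_or,
    not_le]

namespace ProbabilityTheory

section

variable {Ω ι : Type*} [MeasurableSpace Ω] {μ : Measure Ω} {U : ι → Ω → ℝ}

lemma iIndepFun.measureReal_forall_le_eq_prod (hindep : iIndepFun U μ) (S : Finset ι)
    (x : ι → ℝ) :
    μ.real {ω | ∀ i ∈ S, U i ω ≤ x i} = ∏ i ∈ S, μ.real {ω | U i ω ≤ x i} := by
  have h := hindep.measure_inter_preimage_eq_mul S (sets := fun i ↦ Set.Iic (x i))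
    (fun _ _ ↦ measurableSet_Iic)
  simp only [Set.preimage, Set.mem_Iic] at h
  simp only [measureReal_def, Set.ofPred_forall, h, ENNReal.toReal_prod]

lemma iIndepFun.measureReal_le_and_le_eq_mul [DecidableEq ι] (hindep : iIndepFun U μ)
    {i j : ι} (hij : i ≠ j) (x y : ℝ) :
    μ.real {ω | U i ω ≤ x ∧ U j ω ≤ y} =
      μ.real {ω | U i ω ≤ x} * μ.real {ω | U j ω ≤ y} := by
  have h := hindep.measureReal_forall_le_eq_prod {i, j} (Function.update (fun _ ↦ y) i x)
  simpa [Finset.prod_pair hij, hij.symm] using h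

end

theorem iIndepFun.measureReal_lt_max_and_lt_max {Ω : Type*} [MeasurableSpace Ω] {μ : Measure Ω}
    [IsProbabilityMeasure μ] {U : Fin 3 → Ω → ℝ} (hindep : iIndepFun U μ)
    (hmeas : ∀ i, Measurable (U i)) (x₁ x₂ : ℝ) :
    μ.real {ω | x₁ < max (U 0 ω) (U 2 ω) ∧ x₂ < max (U 1 ω) (U 2 ω)} =
      1 - μ.real {ω | U 0 ω ≤ x₁} * μ.real {ω | U 2 ω ≤ x₁}
        - μ.real {ω | U 1 ω ≤ x₂} * μ.real {ω | U 2 ω ≤ x₂}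
        + μ.real {ω | U 0 ω ≤ x₁} * μ.real {ω | U 1 ω ≤ x₂} *
          μ.real {ω | U 2 ω ≤ min x₁ x₂} := by
  set A := {ω | U 0 ω ≤ x₁ ∧ U 2 ω ≤ x₁}
  set B := {ω | U 1 ω ≤ x₂ ∧ U 2 ω ≤ x₂}
  have hle (i : Fin 3) (x : ℝ) : MeasurableSet {ω | U i ω ≤ x} :=
    measurableSet_le (hmeas i) measurable_const
  have hA : MeasurableSet A := (hle 0 x₁).inter (hle 2 x₁)
  have hB : MeasurableSet B := (hle 1 x₂).inter (hle 2 x₂)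
  have hAB : A ∩ B = {ω | ∀ i ∈ Finset.univ, U i ω ≤ ![x₁, x₂, min x₁ x₂] i} := by
    ext ω
    simp only [A, B, Set.mem_inter_iff, Set.mem_ofPred_eq, Finset.mem_univ, forall_const,
      Fin.forall_fin_succ, Fin.succ_zero_eq_one, Fin.succ_one_eq_two, Matrix.cons_val, le_min_iff,
      IsEmpty.forall_iff, and_true]
    tauto
  have hunion : μ.real (A ∪ B) + μ.real (A ∩ B) = μ.real A + μ.real B :=
    measureReal_union_add_inter₀ hB.nullMeasurableSet
  rw [hAB, hindep.measureReal_forall_le_eq_prod, Fin.prod_univ_three,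
    hindep.measureReal_le_and_le_eq_mul (by decide : (0 : Fin 3) ≠ 2),
    hindep.measureReal_le_and_le_eq_mul (by decide : (1 : Fin 3) ≠ 2)] at hunion
  rw [setOf_lt_max_and_lt_max_eq_compl, probReal_compl_eq_one_sub (hA.union hB)]
  simp only [Matrix.cons_val] at hunion
  linarith

end ProbabilityTheory

theorem stmt_9_general {Ω : Type*} [MeasureSpace Ω] [IsProbabilityMeasure (ℙ : Measure Ω)]
    (a b c d : ℝ) (ha : 0 < a) (hc : 0 < c)
    (α : Fin 3 → ℝ)
    (U : Fin 3 → Ω → ℝ) (hmeas : ∀ i, Measurable (U i))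
    (hindep : iIndepFun U ℙ)
    (hcdf : ∀ i, ∀ x : ℝ, 0 < x →
      (ℙ {ω | U i ω ≤ x}).toReal = (G a b c d x) ^ (α i))
    (x₁ x₂ : ℝ) (hx₁ : 0 < x₁) (hx₂ : 0 < x₂) :
    (ℙ {ω | x₁ < max (U 0 ω) (U 2 ω) ∧ x₂ < max (U 1 ω) (U 2 ω)}).toReal =
      1 - (G a b c d x₁) ^ (α 0 + α 2) - (G a b c d x₂) ^ (α 1 + α 2) +
        (G a b c d x₁) ^ (α 0) * (G a b c d x₂) ^ (α 1) *
          (G a b c d (min x₁ x₂)) ^ (α 2) := by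
  have hF : ∀ i, ∀ x : ℝ, 0 < x → (ℙ : Measure Ω).real {ω | U i ω ≤ x} = G a b c d x ^ α i := hcdf
  rw [← measureReal_def, hindep.measureReal_lt_max_and_lt_max hmeas, hF 0 x₁ hx₁, hF 2 x₁ hx₁,
    hF 1 x₂ hx₂, hF 2 x₂ hx₂, hF 2 _ (lt_min hx₁ hx₂), rpow_add (G_pos ha hc hx₁),
    rpow_add (G_pos ha hc hx₂)]

theorem stmt_9 {Ω : Type*} [MeasureSpace Ω] [IsProbabilityMeasure (ℙ : Measure Ω)]
    (a b c d : ℝ) (ha : 0 < a) (hb : 0 < b) (hc : 0 < c) (hd : 0 < d)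
    (α : Fin 3 → ℝ) (hα : ∀ i, 0 < α i)
    (U : Fin 3 → Ω → ℝ) (hmeas : ∀ i, Measurable (U i))
    (hindep : iIndepFun U ℙ)
    (hcdf : ∀ i, ∀ x : ℝ, 0 < x →
      (ℙ {ω | U i ω ≤ x}).toReal = (G a b c d x) ^ (α i))
    (hcdf0 : ∀ i, ∀ x : ℝ, x ≤ 0 → ℙ {ω | U i ω ≤ x} = 0)
    (x₁ x₂ : ℝ) (hx₁ : 0 < x₁) (hx₂ : 0 < x₂) :
    (ℙ {ω | x₁ < max (U 0 ω) (U 2 ω) ∧ x₂ < max (U 1 ω) (U 2 ω)}).toReal =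
      1 - (G a b c d x₁) ^ (α 0 + α 2) - (G a b c d x₂) ^ (α 1 + α 2) +
        (G a b c d x₁) ^ (α 0) * (G a b c d x₂) ^ (α 1) *
          (G a b c d (min x₁ x₂)) ^ (α 2) :=
  stmt_9_general a b c d ha hc α U hmeas hindep hcdf x₁ x₂ hx₁ hx₂
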